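/- arXiv:2408.11970 — 3 statements merged into one kernel-verified Lean document; each statement's English description precedes it below -/
import Mathlib

section
/- Let 0 < μ < λ and t_b > 0, and define A = (p_b/μ)·(1 - e^{-μ t_b})/(e^{(λ-μ)t_b} - 1) with p_b > 0. Then (μ - λ)·A + p_b > 0. -/
/-- With A = (p_b/μ)(1-e^{-μt_b})/(e^{(λ-μ)t_b}-1), 0 < μ < λ, t_b > 0,
p_b > 0, one has (μ - λ)A + p_b > 0. -/
theorem drift_coeff_pos (pb mu lam tb : ℝ)
    (hpb : 0 < pb) (hmu : 0 < mu) (hlam : mu < lam) (htb : 0 < tb) :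
    0 < (mu - lam) * ((pb / mu) * (1 - Real.exp (-mu * tb)) / (Real.exp ((lam - mu) * tb) - 1))
        + pb := by
  have hc : 0 < lam - mu := by linarith
  have h1 : (-mu * tb) + 1 < Real.exp (-mu * tb) :=
    Real.add_one_lt_exp (by nlinarith)
  have h2 : ((lam - mu) * tb) + 1 < Real.exp ((lam - mu) * tb) :=
    Real.add_one_lt_exp (by nlinarith)
  have hD : 0 < Real.exp ((lam - mu) * tb) - 1 := by nlinarith
  have hX : 0 < 1 - Real.exp (-mu * tb) := by
    have : Real.exp (-mu * tb) < 1 := by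
      rw [Real.exp_lt_one_iff]; nlinarith
    linarith
  have hkey : (lam - mu) * (1 - Real.exp (-mu * tb)) < mu * (Real.exp ((lam - mu) * tb) - 1) := by
    nlinarith
  have heq : (mu - lam) * ((pb / mu) * (1 - Real.exp (-mu * tb)) / (Real.exp ((lam - mu) * tb) - 1))
      = -((lam - mu) * pb * (1 - Real.exp (-mu * tb))) / (mu * (Real.exp ((lam - mu) * tb) - 1)) := by
    field_simp
    ring
  rw [heq]
  rw [neg_div, neg_add_eq_sub, sub_pos, div_lt_iff₀ (by positivity)]
  nlinarith
end

section
/- Let g(x) = A x - B + f with constants A ≥ 0, B, f, and let V solve the smooth-pasting system: V(x) = M₁ x^{γ₁} + p_b x/(λ-μ) on (0, X̄), with M₁ X̄^{γ₁} + p_b X̄/(λ-μ) = g(X̄) (value matching) and M₁ γ₁ X̄^{γ₁-1} + p_b/(λ-μ) = A (smooth pasting). Then the threshold is X̄ = (γ₁/(γ₁-1))·(f - B)/(p_b/(λ-μ) - A), provided γ₁ > 1 and p_b/(λ-μ) - A > 0 and f > B. -/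
/-- If V(x) = M₁x^{γ₁} + p_b x/(λ-μ) satisfies value matching and smooth
pasting against g(x) = Ax - B + f at X̄ > 0, with γ₁ > 1, p_b/(λ-μ) - A > 0, f > B, then
X̄ = (γ₁/(γ₁-1))·(f-B)/(p_b/(λ-μ) - A). -/
theorem smooth_pasting_threshold (pb mu lam g1 A B f M1 Xbar : ℝ)
    (hpb : 0 < pb) (hmu : 0 < mu) (hlam : mu < lam)
    (hA : 0 ≤ A) (hg1 : 1 < g1) (hslope : 0 < pb / (lam - mu) - A) (hfB : B < f)
    (hXbar : 0 < Xbar)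
    (value_matching : M1 * Xbar ^ g1 + pb * Xbar / (lam - mu) = A * Xbar - B + f)
    (smooth_pasting : M1 * g1 * Xbar ^ (g1 - 1) + pb / (lam - mu) = A) :
    Xbar = (g1 / (g1 - 1)) * ((f - B) / (pb / (lam - mu) - A)) := by
  have hpow : Xbar ^ (g1 - 1) * Xbar = Xbar ^ g1 := by
    rw [← Real.rpow_add_one hXbar.ne' (g1-1)]
    norm_num
  set c := pb / (lam - mu) with hc
  have hlm : lam - mu ≠ 0 := by linarith
  -- From smooth pasting times Xbar:
  have h2 : M1 * g1 * Xbar ^ g1 = (A - c) * Xbar := by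
    have := congrArg (· * Xbar) smooth_pasting
    calc M1 * g1 * Xbar ^ g1 = M1 * g1 * (Xbar ^ (g1 - 1) * Xbar) := by rw [hpow]
      _ = (M1 * g1 * Xbar ^ (g1 - 1) + c) * Xbar - c * Xbar := by ring
      _ = (A - c) * Xbar := by rw [smooth_pasting]; ring
  -- From value matching:
  have h1 : M1 * Xbar ^ g1 = (A - c) * Xbar + f - B := by
    have : pb * Xbar / (lam - mu) = c * Xbar := by rw [hc]; field_simp
    rw [this] at value_matching
    linarith
  -- Combine:
  have key : (c - A) * Xbar * (g1 - 1) = g1 * (f - B) := by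
    have := congrArg (g1 * ·) h1
    nlinarith [h2, h1]
  have hg1' : g1 - 1 ≠ 0 := by linarith
  have hs : c - A ≠ 0 := by
    have : 0 < c - A := hslope
    linarith
  field_simp
  nlinarith [key]
end

section
/- With the value function V(x) = ((B - f)/(γ₁ - 1))·(x/X̄)^{γ₁} + p_b x/(λ-μ) for x ≤ X̄ and V(x) = A x - B + f for x ≥ X̄, where X̄ = (γ₁/(γ₁-1))(f-B)/(p_b/(λ-μ)-A): for all x ≥ X̄, the expression μ x A + (σ²/2)x²·0 - λ(A x - B + f) + p_b x is nonnegative; equivalently (f-B)·((x/X̄)(λ-μ)γ₁/(γ₁-1) - λ) ≥ 0. -/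
/-- In the stopping region x ≥ X̄, with X̄ = (γ₁/(γ₁-1))(f-B)/(p_b/(λ-μ)-A),
the generator applied to g(x) = Ax - B + f is nonnegative:
μxA + (σ²/2)x²·0 - λ(Ax - B + f) + p_b x ≥ 0, and equivalently
(f-B)·((x/X̄)(λ-μ)γ₁/(γ₁-1) - λ) ≥ 0. -/
theorem generator_nonneg_in_stopping_region (pb mu lam sigma g1 A B f x : ℝ)
    (hpb : 0 < pb) (hmu : 0 < mu) (hlam : mu < lam) (hs : 0 < sigma)
    (hg1 : 1 < g1) (hroot : sigma ^ 2 / 2 * g1 * (g1 - 1) + mu * g1 - lam = 0)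
    (hfB : B < f) (hA : 0 ≤ A) (hA' : A < pb / (lam - mu))
    (hx : (g1 / (g1 - 1)) * ((f - B) / (pb / (lam - mu) - A)) ≤ x) :
    0 ≤ mu * x * A + sigma ^ 2 / 2 * x ^ 2 * 0 - lam * (A * x - B + f) + pb * x ∧
    0 ≤ (f - B) *
        ((x / ((g1 / (g1 - 1)) * ((f - B) / (pb / (lam - mu) - A)))) * (lam - mu) * g1 / (g1 - 1)
          - lam) := by
  have hg0 : 0 < g1 - 1 := by linarith
  have hlm : 0 < lam - mu := by linarith
  have hden : 0 < pb / (lam - mu) - A := by linarith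
  have hmug : mu * g1 ≤ lam := by nlinarith [sq_nonneg sigma, mul_pos (mul_pos (div_pos (pow_pos hs 2) two_pos) (by linarith : (0:ℝ) < g1)) hg0]
  have hXpos : 0 < (g1 / (g1 - 1)) * ((f - B) / (pb / (lam - mu) - A)) :=
    mul_pos (div_pos (by linarith) hg0) (div_pos (by linarith) hden)
  set X := (g1 / (g1 - 1)) * ((f - B) / (pb / (lam - mu) - A)) with hX
  have hratio : 1 ≤ x / X := (one_le_div hXpos).mpr hx
  -- key: X * (pb - (lam - mu) * A) = g1/(g1-1) * (f - B) * (lam - mu)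
  have hcancel : X * (pb / (lam - mu) - A) = (g1 / (g1 - 1)) * (f - B) := by
    rw [hX, mul_assoc, div_mul_cancel₀ _ (ne_of_gt hden)]
  constructor
  · have h1 : X * (pb / (lam - mu) - A) ≤ x * (pb / (lam - mu) - A) :=
      mul_le_mul_of_nonneg_right hx hden.le
    rw [hcancel] at h1
    -- g1/(g1-1) * (f-B) * (λ-μ) ≥ λ (f-B) since (λ-μ) g1 ≥ λ (g1-1)
    have h2 : lam * (f - B) ≤ (g1 / (g1 - 1)) * (f - B) * (lam - mu) := by
      rw [div_mul_eq_mul_div, div_mul_eq_mul_div, le_div_iff₀ hg0]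
      nlinarith
    have h3 : x * (pb / (lam - mu) - A) * (lam - mu) = x * (pb - (lam - mu) * A) := by
      field_simp
    have h4 : lam * (f - B) ≤ x * (pb - (lam - mu) * A) := by
      calc lam * (f - B) ≤ (g1 / (g1 - 1)) * (f - B) * (lam - mu) := h2
        _ ≤ x * (pb / (lam - mu) - A) * (lam - mu) :=
            mul_le_mul_of_nonneg_right h1 hlm.le
        _ = x * (pb - (lam - mu) * A) := h3
    nlinarith
  · have hb : lam ≤ (x / X) * (lam - mu) * g1 / (g1 - 1) := by
      rw [le_div_iff₀ hg0]
      have : (lam - mu) * g1 ≤ (x / X) * (lam - mu) * g1 := by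
        nlinarith [mul_pos hlm (by linarith : (0:ℝ) < g1)]
      nlinarith
    have := sub_nonneg.mpr hb
    exact mul_nonneg (by linarith) this
end
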